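/- Let L = ℚ(√3). The genus-2 curve C : y² = −2x⁶ − 3x⁴ + 20x² + 52 has no L-rational points; that is, there are no x, y ∈ L with y² = −2x⁶ − 3x⁴ + 20x² + 52. -/

import Mathlib

/-!
Since `4 ^ 2 ≡ 3 [MOD 13]`, Hensel's lemma gives a square root of `3` in `ℚ₁₃`, so
`ℚ(√3)` embeds into `ℚ₁₃` and it suffices to show that the curve has no `ℚ₁₃`-points.
A point with `‖x‖ ≤ 1` has `‖y‖ ≤ 1` and would give a solution modulo `13²`; a point with
`‖x‖ > 1` gives the integral point `(1/x, y/x³)` on the reversed model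
`z² = -2 - 3w² + 20w⁴ + 52w⁶`. A finite search shows that neither model has a solution
modulo `13²`.
-/

/-- `L = ℚ(√3)`, the real quadratic field, as a subfield of `ℝ`. -/
noncomputable def L : IntermediateField ℚ ℝ :=
  IntermediateField.adjoin ℚ ({Real.sqrt 3} : Set ℝ)

open Polynomial

instance fact_prime_thirteen : Fact (Nat.Prime 13) := ⟨by norm_num⟩

theorem PadicInt.exists_sq_eq_of_dvd_sq_sub {p : ℕ} [Fact p.Prime] {a r : ℤ}
    (h : (p : ℤ) ∣ r ^ 2 - a) (hr : IsCoprime (2 * r) p) : ∃ t : ℤ_[p], t ^ 2 = a := by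
  have hnorm : ‖(X ^ 2 - C a : ℤ[X]).aeval (r : ℤ_[p])‖ <
      ‖(X ^ 2 - C a : ℤ[X]).derivative.aeval (r : ℤ_[p])‖ ^ 2 := by
    have hval : (X ^ 2 - C a : ℤ[X]).aeval (r : ℤ_[p]) = ((r ^ 2 - a : ℤ) : ℤ_[p]) := by simp
    have hder : (X ^ 2 - C a : ℤ[X]).derivative.aeval (r : ℤ_[p]) = ((2 * r : ℤ) : ℤ_[p]) := by
      simp [mul_comm, map_ofNat]
    rw [hval, hder, PadicInt.norm_intCast_eq_one_iff.mpr hr, one_pow]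
    exact PadicInt.norm_intCast_lt_one_iff.mpr h
  obtain ⟨t, ht, -⟩ := hensels_lemma hnorm
  exact ⟨t, by simpa [sub_eq_zero] using ht⟩

theorem minpoly_sqrt_three : minpoly ℚ (√3) = X ^ 2 - C 3 := by
  refine (minpoly.eq_of_irreducible_of_monic ?_ ?_ (monic_X_pow_sub_C _ two_ne_zero)).symm
  · refine X_pow_sub_C_irreducible_of_prime Nat.prime_two fun q hq => ?_
    have hq' : (q : ℝ) ^ 2 = 3 := by exact_mod_cast hq
    refine Nat.prime_three.irrational_sqrt ⟨|q|, ?_⟩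
    rw [Nat.cast_ofNat, ← hq', Real.sqrt_sq_eq_abs, Rat.cast_abs]
  · simp

theorem nonempty_algHom_L_of_sq_eq_three {K : Type*} [Field K] [Algebra ℚ K] {t : K}
    (ht : t ^ 2 = 3) : Nonempty (L →ₐ[ℚ] K) := by
  have hint : IsIntegral ℚ (√3) := ⟨X ^ 2 - C 3, monic_X_pow_sub_C _ two_ne_zero, by simp⟩
  refine ⟨(IntermediateField.algHomAdjoinIntegralEquiv ℚ hint).symm ⟨t, ?_⟩⟩
  rw [minpoly_sqrt_three, mem_aroots]
  exact ⟨(monic_X_pow_sub_C _ two_ne_zero).ne_zero, by simp [ht]⟩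

theorem nonempty_algHom_L_padic : Nonempty (L →ₐ[ℚ] ℚ_[13]) := by
  obtain ⟨t, ht⟩ := PadicInt.exists_sq_eq_of_dvd_sq_sub (p := 13) (a := 3) (r := 4)
    (by norm_num) (by norm_num [Int.isCoprime_iff_gcd_eq_one])
  refine nonempty_algHom_L_of_sq_eq_three (t := (t : ℚ_[13])) ?_
  rw [← PadicInt.coe_pow, ht]
  rfl

noncomputable def sextic : ℤ[X] := -2 * X ^ 6 - 3 * X ^ 4 + 20 * X ^ 2 + 52

noncomputable def sexticReverse : ℤ[X] := -2 - 3 * X ^ 2 + 20 * X ^ 4 + 52 * X ^ 6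

@[simp]
theorem aeval_sextic {R : Type*} [CommRing R] (x : R) :
    aeval x sextic = -2 * x ^ 6 - 3 * x ^ 4 + 20 * x ^ 2 + 52 := by
  simp [sextic, map_ofNat]

@[simp]
theorem aeval_sexticReverse {R : Type*} [CommRing R] (w : R) :
    aeval w sexticReverse = -2 - 3 * w ^ 2 + 20 * w ^ 4 + 52 * w ^ 6 := by
  simp [sexticReverse, map_ofNat]

theorem aeval_sextic_eq_pow_mul {K : Type*} [Field K] {x : K} (hx : x ≠ 0) :
    aeval x sextic = x ^ 6 * aeval x⁻¹ sexticReverse := by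
  simp only [aeval_sextic, aeval_sexticReverse]
  field_simp

set_option maxRecDepth 4000 in
theorem sq_ne_aeval_sextic_zmod : ∀ x y : ZMod (13 ^ 2), y ^ 2 ≠ aeval x sextic := by
  simp only [aeval_sextic]
  decide

set_option maxRecDepth 4000 in
theorem sq_ne_aeval_sexticReverse_zmod :
    ∀ w z : ZMod (13 ^ 2), z ^ 2 ≠ aeval w sexticReverse := by
  simp only [aeval_sexticReverse]
  decide

theorem PadicInt.norm_le_one_of_sq_eq {p : ℕ} [Fact p.Prime] {y : ℚ_[p]} {z : ℤ_[p]}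
    (h : y ^ 2 = z) : ‖y‖ ≤ 1 := by
  have : ‖y‖ ^ 2 ≤ 1 := by rw [← norm_pow, h]; exact z.norm_le_one
  exact (pow_le_one_iff_of_nonneg (norm_nonneg y) two_ne_zero).mp this

theorem Padic.sq_ne_aeval_of_zmod {p : ℕ} [Fact p.Prime] (n : ℕ) {P : ℤ[X]}
    (hP : ∀ x y : ZMod (p ^ n), y ^ 2 ≠ aeval x P) {x y : ℚ_[p]} (hx : ‖x‖ ≤ 1) :
    y ^ 2 ≠ aeval x P := by
  intro h
  set x' : ℤ_[p] := ⟨x, hx⟩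
  have hcoe : aeval x P = (aeval x' P : ℤ_[p]) :=
    aeval_algHom_apply PadicInt.Coe.ringHom.toIntAlgHom x' P
  have hy : ‖y‖ ≤ 1 := PadicInt.norm_le_one_of_sq_eq (h.trans hcoe)
  set y' : ℤ_[p] := ⟨y, hy⟩
  have h' : y' ^ 2 = aeval x' P := Subtype.ext (h.trans hcoe)
  apply hP (PadicInt.toZModPow n x') (PadicInt.toZModPow n y')
  rw [← map_pow, h']
  exact (aeval_algHom_apply (PadicInt.toZModPow n).toIntAlgHom x' P).symm

theorem Padic.sq_ne_aeval_sextic (x y : ℚ_[13]) : y ^ 2 ≠ aeval x sextic := by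
  rcases le_or_gt ‖x‖ 1 with hx | hx
  · exact Padic.sq_ne_aeval_of_zmod 2 sq_ne_aeval_sextic_zmod hx
  · have hx0 : x ≠ 0 := norm_pos_iff.mp (one_pos.trans hx)
    have hw : ‖x⁻¹‖ ≤ 1 := by rw [norm_inv]; exact inv_le_one_of_one_le₀ hx.le
    intro h
    apply Padic.sq_ne_aeval_of_zmod 2 sq_ne_aeval_sexticReverse_zmod hw (y := y * x⁻¹ ^ 3)
    rw [aeval_sextic_eq_pow_mul hx0] at h
    rw [mul_pow, h]
    field_simp

/-- The genus-2 curve `y² = −2x⁶ − 3x⁴ + 20x² + 52` has no `L`-rational points,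
where `L = ℚ(√3)`. -/
theorem no_L_points_on_genus_two_curve :
    ¬ ∃ x y : ℝ, x ∈ L ∧ y ∈ L ∧
      y ^ 2 = -2 * x ^ 6 - 3 * x ^ 4 + 20 * x ^ 2 + 52 := by
  rintro ⟨x, y, hx, hy, h⟩
  obtain ⟨φ⟩ := nonempty_algHom_L_padic
  have hL : (⟨y, hy⟩ : L) ^ 2 = aeval (⟨x, hx⟩ : L) sextic := by
    rw [aeval_sextic]
    exact Subtype.ext h
  apply Padic.sq_ne_aeval_sextic (φ ⟨x, hx⟩) (φ ⟨y, hy⟩)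
  rw [← map_pow, hL]
  exact (aeval_algHom_apply φ.toRingHom.toIntAlgHom _ _).symm
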